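/- If a school s (other than the null school) is assigned at least one marginalized student under DA, then no advantaged student assigned elsewhere desires s under DA: for every y ∈ Y with DA_y(P) ≠ s, it holds that rk_y(s) > rk_y(DA_y(P)). -/
import Mathlib


/-!
A school choice problem: finitely many students `I` and schools `S`
(with a distinguished null school of quota `|I|`).  Each student `i` has a
strict preference over schools represented by its rank function
`rk i : S → ℕ` (a bijection onto `{1, …, |S|}`, where rank 1 is the most
preferred school); each school `s` has a quota `quota s ≥ 1` and a strict
priority over students represented by `prio s : I → ℕ`
(`i ▷_s j` iff `prio s i < prio s j`).
-/
structure SchoolChoice (I S : Type) [Fintype I] [Fintype S]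
    [DecidableEq I] [DecidableEq S] where
  nullSchool : S
  quota : S → ℕ
  rk : I → S → ℕ
  prio : S → I → ℕ
  quota_pos : ∀ s : S, 1 ≤ quota s
  quota_null : quota nullSchool = Fintype.card I
  rk_inj : ∀ i : I, Function.Injective (rk i)
  rk_mem : ∀ (i : I) (s : S), rk i s ∈ Finset.Icc 1 (Fintype.card S)
  prio_inj : ∀ s : S, Function.Injective (prio s)

namespace SchoolChoice

open scoped Classical

variable {I S : Type} [Fintype I] [Fintype S] [DecidableEq I] [DecidableEq S]

/-- `μ` is a matching: no school is assigned more students than its quota. -/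
def IsMatching (P : SchoolChoice I S) (μ : I → S) : Prop :=
  ∀ s : S, (Finset.univ.filter fun i => μ i = s).card ≤ P.quota s

/-- Given the sets `R i` of schools that have rejected student `i` so far,
student `i` proposes to her most preferred school that has not rejected her. -/
noncomputable def propose (P : SchoolChoice I S) (R : I → Finset S) (i : I) : S :=
  if h : (Finset.univ \ R i).Nonempty then
    (Finset.exists_min_image (Finset.univ \ R i) (P.rk i) h).choose
  else P.nullSchool

/-- At the DA round with rejection state `R`, school `s` rejects student `i`:
`i` applies to `s` and at least `quota s` applicants to `s` have higher priority. -/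
def rejectsAt (P : SchoolChoice I S) (R : I → Finset S) (s : S) (i : I) : Prop :=
  P.propose R i = s ∧
    P.quota s ≤ (Finset.univ.filter fun j =>
      P.propose R j = s ∧ P.prio s j < P.prio s i).card

/-- One round of student-proposing Deferred Acceptance: record new rejections. -/
noncomputable def stepR (P : SchoolChoice I S) (R : I → Finset S) : I → Finset S :=
  fun i => R i ∪ (Finset.univ.filter fun s => P.rejectsAt R s i)

/-- Rejection state after `n` rounds of Deferred Acceptance. -/
noncomputable def daR (P : SchoolChoice I S) : ℕ → I → Finset S
  | 0 => fun _ => (∅ : Finset S)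
  | n + 1 => P.stepR (P.daR n)

/-- The outcome of the student-proposing Deferred Acceptance algorithm:
iterate rounds until no rejection occurs (which happens within
`|I|·|S| + 1` rounds); each student is matched to the school holding her. -/
noncomputable def DA (P : SchoolChoice I S) : I → S :=
  P.propose (P.daR (Fintype.card I * Fintype.card S + 1))

/-- A matching `ν` is stable-dominating if every student weakly prefers
`ν` to the DA outcome. -/
def StableDominating (P : SchoolChoice I S) (ν : I → S) : Prop :=
  P.IsMatching ν ∧ ∀ i : I, P.rk i (ν i) ≤ P.rk i (P.DA i)

/-- Student `i` is unimprovable: every stable-dominating matching assigns `i`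
to her DA school. -/
def Unimprovable (P : SchoolChoice I S) (i : I) : Prop :=
  ∀ ν : I → S, P.StableDominating ν → ν i = P.DA i

/-- Edge of the envy digraph `G^DA(P)`: `i` prefers `j`'s DA school to her own. -/
def Envy (P : SchoolChoice I S) (i j : I) : Prop :=
  P.rk i (P.DA j) < P.rk i (P.DA i)

/-- Student `i` lies on a directed cycle of the envy digraph `G^DA(P)`. -/
def OnCycle (P : SchoolChoice I S) (i : I) : Prop :=
  ∃ (m : ℕ) (c : ℕ → I), 0 < m ∧ c 0 = i ∧ c m = i ∧
    ∀ k < m, P.Envy (c k) (c (k + 1))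

/-- Student `i` desires school `s` in matching `μ`. -/
def Desires (P : SchoolChoice I S) (μ : I → S) (i : I) (s : S) : Prop :=
  P.rk i s < P.rk i (μ i)

/-- `μ` is non-wasteful: every desired school is filled to quota. -/
def NonWasteful (P : SchoolChoice I S) (μ : I → S) : Prop :=
  ∀ s : S, (∃ i : I, P.Desires μ i s) →
    (Finset.univ.filter fun i => μ i = s).card = P.quota s

/-- `μ` is stable: a non-wasteful matching with no priority violations. -/
def Stable (P : SchoolChoice I S) (μ : I → S) : Prop :=
  P.IsMatching μ ∧ P.NonWasteful μ ∧
    ¬ ∃ (i j : I) (s : S), P.Desires μ i s ∧ μ j = s ∧ P.prio s i < P.prio s j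

/-- `μ` Pareto-dominates `ν`. -/
def ParetoDominates (P : SchoolChoice I S) (μ ν : I → S) : Prop :=
  (∀ i : I, P.rk i (μ i) ≤ P.rk i (ν i)) ∧ ∃ i : I, P.rk i (μ i) < P.rk i (ν i)

/-- `μ` is a Pareto-efficient matching. -/
def ParetoEfficient (P : SchoolChoice I S) (μ : I → S) : Prop :=
  P.IsMatching μ ∧ ∀ ν : I → S, P.IsMatching ν → ¬ P.ParetoDominates ν μ

end SchoolChoice

namespace SchoolChoice

open scoped Classical

variable {I S : Type} [Fintype I] [Fintype S] [DecidableEq I] [DecidableEq S]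

/-- Rank counting lemma on finsets of naturals. -/
lemma aux_rank_filter_card (M : Finset ℕ) (q : ℕ) :
    (M.filter fun m => (M.filter (· < m)).card < q).card = min q M.card := by
  set r : ℕ → ℕ := fun m => (M.filter (· < m)).card with hr
  have hmono : ∀ a ∈ M, ∀ b ∈ M, a < b → r a < r b := by
    intro a ha b hb hab
    apply Finset.card_lt_card
    constructor
    · intro x hx
      simp only [Finset.mem_filter] at hx ⊢
      exact ⟨hx.1, lt_trans hx.2 hab⟩
    · intro hsub
      have : a ∈ M.filter (· < b) := Finset.mem_filter.2 ⟨ha, hab⟩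
      have := hsub this
      simp only [Finset.mem_filter] at this
      exact lt_irrefl a this.2
  have hinj : Set.InjOn r M := by
    intro a ha b hb hab
    rcases lt_trichotomy a b with h | h | h
    · exact absurd hab (ne_of_lt (hmono a ha b hb h))
    · exact h
    · exact absurd hab.symm (ne_of_lt (hmono b hb a ha h))
  have hlt : ∀ m ∈ M, r m < M.card := by
    intro m hm
    apply Finset.card_lt_card
    constructor
    · exact Finset.filter_subset _ _
    · intro hsub
      have := hsub hm
      simp only [Finset.mem_filter] at this
      exact lt_irrefl m this.2
  have himg : M.image r = Finset.range M.card := by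
    apply Finset.eq_of_subset_of_card_le
    · intro x hx
      rw [Finset.mem_image] at hx
      obtain ⟨m, hm, rfl⟩ := hx
      exact Finset.mem_range.2 (hlt m hm)
    · rw [Finset.card_range, Finset.card_image_of_injOn hinj]
  have hfilt : (M.filter fun m => r m < q).image r = (M.image r).filter (· < q) :=
    (Finset.filter_image (f := r) (s := M) (p := (· < q))).symm
  have hcard : (M.filter fun m => r m < q).card = ((M.image r).filter (· < q)).card := by
    rw [← hfilt]
    exact (Finset.card_image_of_injOn (hinj.mono (fun x hx =>
      Finset.mem_coe.1 (Finset.filter_subset _ _ (Finset.mem_coe.1 hx))))).symm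
  rw [hcard, himg]
  have : (Finset.range M.card).filter (· < q) = Finset.range (min q M.card) := by
    ext x
    simp [Finset.mem_filter, Finset.mem_range, lt_min_iff, and_comm]
  rw [this, Finset.card_range]

lemma propose_spec (P : SchoolChoice I S) (R : I → Finset S) (i : I)
    (h : (Finset.univ \ R i).Nonempty) :
    P.propose R i ∉ R i ∧ ∀ t : S, t ∉ R i → P.rk i (P.propose R i) ≤ P.rk i t := by
  have hspec := (Finset.exists_min_image (Finset.univ \ R i) (P.rk i) h).choose_spec
  have hp : P.propose R i = (Finset.exists_min_image (Finset.univ \ R i) (P.rk i) h).choose := by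
    simp [propose, dif_pos h]
  constructor
  · rw [hp]
    have := hspec.1
    rw [Finset.mem_sdiff] at this
    exact this.2
  · intro t ht
    rw [hp]
    exact hspec.2 t (Finset.mem_sdiff.2 ⟨Finset.mem_univ t, ht⟩)

lemma propose_congr (P : SchoolChoice I S) (R R' : I → Finset S) (j : I)
    (h : R j = R' j) (hne : (Finset.univ \ R j).Nonempty) :
    P.propose R j = P.propose R' j := by
  have hne' : (Finset.univ \ R' j).Nonempty := h ▸ hne
  obtain ⟨h1, h2⟩ := P.propose_spec R j hne
  obtain ⟨h1', h2'⟩ := P.propose_spec R' j hne'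
  apply P.rk_inj j
  have a := h2 _ (show P.propose R' j ∉ R j by rw [h]; exact h1')
  have b := h2' _ (show P.propose R j ∉ R' j by rw [← h]; exact h1)
  omega

lemma not_rejects_null (P : SchoolChoice I S) (R : I → Finset S) (i : I) :
    ¬ P.rejectsAt R P.nullSchool i := by
  rintro ⟨-, hcard⟩
  have hsub : (Finset.univ.filter fun j =>
      P.propose R j = P.nullSchool ∧ P.prio P.nullSchool j < P.prio P.nullSchool i)
      ⊆ Finset.univ.erase i := by
    intro j hj
    simp only [Finset.mem_filter] at hj
    refine Finset.mem_erase.2 ⟨?_, Finset.mem_univ j⟩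
    intro hji; rw [hji] at hj; exact lt_irrefl _ hj.2.2
  have h1 := Finset.card_le_card hsub
  rw [Finset.card_erase_of_mem (Finset.mem_univ i), Finset.card_univ] at h1
  rw [P.quota_null] at hcard
  have hpos : 0 < Fintype.card I := Fintype.card_pos_iff.2 ⟨i⟩
  omega

lemma null_not_mem_daR (P : SchoolChoice I S) (n : ℕ) (i : I) :
    P.nullSchool ∉ P.daR n i := by
  induction n with
  | zero => simp [daR]
  | succ n ih =>
    simp only [daR, stepR, Finset.mem_union, Finset.mem_filter]
    rintro (h | ⟨-, h⟩)
    · exact ih h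
    · exact P.not_rejects_null _ i h

lemma daR_nonempty (P : SchoolChoice I S) (n : ℕ) (i : I) :
    (Finset.univ \ P.daR n i).Nonempty :=
  ⟨P.nullSchool, Finset.mem_sdiff.2 ⟨Finset.mem_univ _, P.null_not_mem_daR n i⟩⟩

lemma propose_stable (P : SchoolChoice I S) (R : I → Finset S) (j : I)
    (h : ¬ P.rejectsAt R (P.propose R j) j) : P.stepR R j = R j := by
  unfold stepR
  have : (Finset.univ.filter fun t => P.rejectsAt R t j) = ∅ := by
    rw [Finset.filter_eq_empty_iff]
    intro t _ hrt
    exact h (hrt.1 ▸ hrt)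
  rw [this, Finset.union_empty]

/-- Key persistence: once a school has `quota s` proposers with priority below `p`,
it keeps that many in the next round. -/
lemma reject_persists_step (P : SchoolChoice I S) (s : S) (p : ℕ) (n : ℕ)
    (h : P.quota s ≤ (Finset.univ.filter fun j =>
      P.propose (P.daR n) j = s ∧ P.prio s j < p).card) :
    P.quota s ≤ (Finset.univ.filter fun j =>
      P.propose (P.daR (n + 1)) j = s ∧ P.prio s j < p).card := by
  set q := P.quota s with hq
  set A := (Finset.univ.filter fun j =>
      P.propose (P.daR n) j = s ∧ P.prio s j < p) with hA
  set M := A.image (P.prio s) with hM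
  have hMcard : M.card = A.card := Finset.card_image_of_injOn ((P.prio_inj s).injOn)
  set B := A.filter (fun j => (M.filter (· < P.prio s j)).card < q) with hB
  have hBcard : B.card = q := by
    have himg : B.image (P.prio s) = M.filter (fun m => (M.filter (· < m)).card < q) := by
      rw [hB, hM]
      exact (Finset.filter_image (f := P.prio s) (s := A)
        (p := fun m => ((A.image (P.prio s)).filter (· < m)).card < q)).symm
    have h1 : B.card = (M.filter (fun m => (M.filter (· < m)).card < q)).card := by
      rw [← himg]
      exact (Finset.card_image_of_injOn ((P.prio_inj s).injOn)).symm
    rw [h1, aux_rank_filter_card, hMcard]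
    omega
  have hBnot : ∀ j ∈ B, ¬ P.rejectsAt (P.daR n) s j := by
    intro j hj
    rw [hB, Finset.mem_filter] at hj
    obtain ⟨hjA, hjrank⟩ := hj
    rw [hA] at hjA
    have hjp : P.prio s j < p := (Finset.mem_filter.1 hjA).2.2
    rintro ⟨-, hcard⟩
    have hsub : (Finset.univ.filter fun k =>
        P.propose (P.daR n) k = s ∧ P.prio s k < P.prio s j) ⊆
        A.filter (fun k => P.prio s k < P.prio s j) := by
      intro k hk
      simp only [Finset.mem_filter] at hk
      refine Finset.mem_filter.2 ⟨?_, hk.2.2⟩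
      rw [hA]
      exact Finset.mem_filter.2 ⟨hk.1, hk.2.1, lt_trans hk.2.2 hjp⟩
    have h2 : (A.filter (fun k => P.prio s k < P.prio s j)).card =
        (M.filter (· < P.prio s j)).card := by
      have : (A.filter (fun k => P.prio s k < P.prio s j)).image (P.prio s) =
          M.filter (· < P.prio s j) := by
        rw [hM]
        exact (Finset.filter_image (f := P.prio s) (s := A)
          (p := (· < P.prio s j))).symm
      rw [← this]
      exact (Finset.card_image_of_injOn ((P.prio_inj s).injOn)).symm
    have := Finset.card_le_card hsub
    omega
  have hBsub : B ⊆ (Finset.univ.filter fun j =>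
      P.propose (P.daR (n + 1)) j = s ∧ P.prio s j < p) := by
    intro j hj
    have hjB := hj
    rw [hB, Finset.mem_filter] at hj
    obtain ⟨hjA, -⟩ := hj
    rw [hA, Finset.mem_filter] at hjA
    obtain ⟨-, hprop, hpr⟩ := hjA
    have hnr : ¬ P.rejectsAt (P.daR n) (P.propose (P.daR n) j) j := by
      rw [hprop]; exact hBnot j hjB
    have hstep : P.daR (n + 1) j = P.daR n j := P.propose_stable (P.daR n) j hnr
    refine Finset.mem_filter.2 ⟨Finset.mem_univ j, ?_, hpr⟩
    show P.propose (P.daR (n + 1)) j = s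
    have : P.propose (P.daR (n + 1)) j = P.propose (P.daR n) j :=
      P.propose_congr _ _ j hstep (P.daR_nonempty (n + 1) j)
    rw [this, hprop]
  calc q = B.card := hBcard.symm
    _ ≤ _ := Finset.card_le_card hBsub

lemma reject_persists (P : SchoolChoice I S) (s : S) (p : ℕ) (m n : ℕ) (hmn : m ≤ n)
    (h : P.quota s ≤ (Finset.univ.filter fun j =>
      P.propose (P.daR m) j = s ∧ P.prio s j < p).card) :
    P.quota s ≤ (Finset.univ.filter fun j =>
      P.propose (P.daR n) j = s ∧ P.prio s j < p).card := by
  induction n, hmn using Nat.le_induction with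
  | base => exact h
  | succ n hmn ih => exact P.reject_persists_step s p n ih

lemma rejects_mem_stepR (P : SchoolChoice I S) (R : I → Finset S) (t : S) (i : I)
    (h : P.rejectsAt R t i) : t ∈ P.stepR R i :=
  Finset.mem_union_right _ (Finset.mem_filter.2 ⟨Finset.mem_univ t, h⟩)

lemma mem_daR_exists (P : SchoolChoice I S) (t : S) (i : I) :
    ∀ n, t ∈ P.daR n i → ∃ m, m < n ∧ P.rejectsAt (P.daR m) t i := by
  intro n
  induction n with
  | zero => simp [daR]
  | succ n ih =>
    intro h
    simp only [daR, stepR, Finset.mem_union, Finset.mem_filter] at h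
    rcases h with h | ⟨-, h⟩
    · obtain ⟨m, hm, hr⟩ := ih h
      exact ⟨m, Nat.lt_succ_of_lt hm, hr⟩
    · exact ⟨n, Nat.lt_succ_self n, h⟩

lemma daR_eventually_fixed (P : SchoolChoice I S) :
    P.stepR (P.daR (Fintype.card I * Fintype.card S + 1)) =
      P.daR (Fintype.card I * Fintype.card S + 1) := by
  set N := Fintype.card I * Fintype.card S with hN
  set f : ℕ → ℕ := fun n => ∑ i : I, (P.daR n i).card with hf
  have hsubset : ∀ n i, P.daR n i ⊆ P.daR (n + 1) i := by
    intro n i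
    show P.daR n i ⊆ P.stepR (P.daR n) i
    exact Finset.subset_union_left
  have hbound : ∀ n, f n ≤ N := by
    intro n
    calc f n ≤ ∑ _i : I, Fintype.card S := by
          apply Finset.sum_le_sum
          intro i _
          calc (P.daR n i).card ≤ Finset.univ.card := Finset.card_le_card (Finset.subset_univ _)
            _ = Fintype.card S := Finset.card_univ
      _ = N := by simp [hN, Finset.sum_const, Finset.card_univ, mul_comm]
  have hstrict : ∀ n, P.daR (n + 1) ≠ P.daR n → f n < f (n + 1) := by
    intro n hne
    have : ∃ i, P.daR (n + 1) i ≠ P.daR n i := by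
      by_contra hc
      push_neg at hc
      exact hne (funext hc)
    obtain ⟨i, hi⟩ := this
    apply Finset.sum_lt_sum
    · intro j _
      exact Finset.card_le_card (hsubset n j)
    · exact ⟨i, Finset.mem_univ i, Finset.card_lt_card
        (Finset.ssubset_iff_subset_ne.2 ⟨hsubset n i, fun h => hi h.symm⟩)⟩
  have hexists : ∃ m, m ≤ N ∧ P.daR (m + 1) = P.daR m := by
    by_contra hc
    push_neg at hc
    have hgrow : ∀ n, n ≤ N + 1 → n ≤ f n := by
      intro n
      induction n with
      | zero => intro _; exact Nat.zero_le _
      | succ n ih =>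
        intro hn
        have h1 := ih (Nat.le_of_succ_le hn)
        have h2 := hstrict n (hc n (by omega))
        omega
    have := hgrow (N + 1) le_rfl
    have := hbound (N + 1)
    omega
  obtain ⟨m, hm, hfix⟩ := hexists
  have hconst : ∀ k, P.daR (m + k) = P.daR m := by
    intro k
    induction k with
    | zero => rfl
    | succ k ih =>
      have : P.daR (m + k + 1) = P.stepR (P.daR (m + k)) := rfl
      rw [show m + (k + 1) = m + k + 1 from rfl, this, ih]
      exact hfix
  have h1 : P.daR (N + 1) = P.daR m := by
    have := hconst (N + 1 - m)
    rwa [show m + (N + 1 - m) = N + 1 by omega] at this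
  rw [h1]
  show P.daR (m + 1) = P.daR m
  exact hfix

end SchoolChoice

/-- If a school `s` other than the null school is assigned at
least one marginalized student under DA, then no advantaged student assigned
elsewhere desires `s` under DA: `rk_y(s) > rk_y(DA_y(P))` for every `y ∈ Y`
with `DA_y(P) ≠ s`. -/
theorem no_advantaged_desires_mixed_school {I S : Type} [Fintype I] [Fintype S]
    [DecidableEq I] [DecidableEq S] (P : SchoolChoice I S)
    (Y Z : Finset I) (hY : Y.Nonempty) (hZ : Z.Nonempty)
    (hdisj : Disjoint Y Z) (hcover : Y ∪ Z = Finset.univ)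
    (hprio : ∀ s : S, ∀ y ∈ Y, ∀ z ∈ Z, P.prio s y < P.prio s z)
    (s : S) (hs : s ≠ P.nullSchool)
    (z : I) (hz : z ∈ Z) (hzs : P.DA z = s) :
    ∀ y ∈ Y, P.DA y ≠ s → P.rk y (P.DA y) < P.rk y s := by
  intro y hy hys
  by_contra hcon
  push_neg at hcon
  set N := Fintype.card I * Fintype.card S with hN
  have hDA : P.DA = P.propose (P.daR (N + 1)) := rfl
  have hne : P.rk y s ≠ P.rk y (P.DA y) := by
    intro h
    exact hys ((P.rk_inj y h).symm)
  have hlt : P.rk y s < P.rk y (P.DA y) := lt_of_le_of_ne hcon hne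
  have hmem : s ∈ P.daR (N + 1) y := by
    by_contra hns
    have hspec := (P.propose_spec (P.daR (N + 1)) y (P.daR_nonempty (N + 1) y)).2 s hns
    rw [← hDA] at hspec
    omega
  obtain ⟨m, hm, hrej⟩ := P.mem_daR_exists s y (N + 1) hmem
  have hpers := P.reject_persists s (P.prio s y) m (N + 1) (le_of_lt hm) hrej.2
  have hsub : (Finset.univ.filter fun j =>
      P.propose (P.daR (N + 1)) j = s ∧ P.prio s j < P.prio s y) ⊆
      (Finset.univ.filter fun j =>
        P.propose (P.daR (N + 1)) j = s ∧ P.prio s j < P.prio s z) := by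
    intro j hj
    simp only [Finset.mem_filter] at hj ⊢
    exact ⟨hj.1, hj.2.1, lt_trans hj.2.2 (hprio s y hy z hz)⟩
  have hzprop : P.propose (P.daR (N + 1)) z = s := by rw [← hDA]; exact hzs
  have hnr : ¬ P.rejectsAt (P.daR (N + 1)) s z := by
    intro hr
    have h1 : s ∈ P.stepR (P.daR (N + 1)) z := P.rejects_mem_stepR _ s z hr
    rw [P.daR_eventually_fixed] at h1
    exact (P.propose_spec (P.daR (N + 1)) z (P.daR_nonempty (N + 1) z)).1 (hzprop ▸ h1)
  exact hnr ⟨hzprop, le_trans hpers (Finset.card_le_card hsub)⟩
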